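/- arXiv:2010.15679 — 3 statements merged into one kernel-verified Lean document; each statement's English description precedes it below -/
import Mathlib

section
/- The Hamiltonian is constant along the Manakov soliton: for all t ∈ ℝ, H(X(·,t)) = H(X(·,0)), where H(u) = (1/2) ∫ℝ (|∂ₓu₁(x)|² + |∂ₓu₂(x)|²) dx − (1/4) ∫ℝ (|u₁(x)|² + |u₂(x)|²)² dx. -/
/-- The Manakov soliton `X(x,t) = η sech(η(x − τ(t))) exp(−iκ(x − τ(t)) + iα(t)) · A`,
where `τ(t) = τ₀ − κt`, `α(t) = α₀ + ((η² + κ²)/2)t` and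
`A = (cos(θ/2) e^{iφ₁}, sin(θ/2) e^{iφ₂})`. -/
noncomputable def manakovSoliton (η κ α₀ τ₀ θ φ₁ φ₂ : ℝ) (x t : ℝ) : ℂ × ℂ :=
  ((η / Real.cosh (η * (x - (τ₀ - κ * t))) : ℝ) : ℂ) •
    (Complex.exp (Complex.I *
        (((-(κ * (x - (τ₀ - κ * t))) + (α₀ + (η ^ 2 + κ ^ 2) / 2 * t)) : ℝ) : ℂ)) •
      (((Real.cos (θ / 2) : ℝ) : ℂ) * Complex.exp (Complex.I * (φ₁ : ℂ)),
       ((Real.sin (θ / 2) : ℝ) : ℂ) * Complex.exp (Complex.I * (φ₂ : ℂ))))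

/-!
Both densities in the Hamiltonian are unchanged by multiplying a field with a unimodular
constant, and the soliton at time `t` is `e^{i(η² + κ²)t/2}` times its profile at time `0`
translated by `κt`; translation invariance of Lebesgue measure does the rest.
-/

open MeasureTheory

noncomputable def kineticDensity (u : ℝ → ℂ × ℂ) (x : ℝ) : ℝ :=
  ‖deriv (fun y => (u y).1) x‖ ^ 2 + ‖deriv (fun y => (u y).2) x‖ ^ 2

noncomputable def massDensity (u : ℝ → ℂ × ℂ) (x : ℝ) : ℝ :=
  ‖(u x).1‖ ^ 2 + ‖(u x).2‖ ^ 2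

section PhaseTranslation

variable (u : ℝ → ℂ × ℂ) {c : ℂ} (a x : ℝ)

theorem kineticDensity_smul_comp_add (hc : ‖c‖ = 1) :
    kineticDensity (fun y => c • u (y + a)) x = kineticDensity u (x + a) := by
  simp only [kineticDensity, Prod.smul_fst, Prod.smul_snd, smul_eq_mul, deriv_const_mul_field,
    deriv_comp_add_const (fun y => (u y).1), deriv_comp_add_const (fun y => (u y).2), norm_mul,
    hc, one_mul]

theorem massDensity_smul_comp_add (hc : ‖c‖ = 1) :
    massDensity (fun y => c • u (y + a)) x = massDensity u (x + a) := by
  simp only [massDensity, Prod.smul_fst, Prod.smul_snd, smul_eq_mul, norm_mul, hc, one_mul]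

end PhaseTranslation

theorem manakovSoliton_eq_smul_comp_add (η κ α₀ τ₀ θ φ₁ φ₂ x t : ℝ) :
    manakovSoliton η κ α₀ τ₀ θ φ₁ φ₂ x t =
      Complex.exp (((η ^ 2 + κ ^ 2) / 2 * t : ℝ) * Complex.I) •
        manakovSoliton η κ α₀ τ₀ θ φ₁ φ₂ (x + κ * t) 0 := by
  have hcosh : η * (x + κ * t - (τ₀ - κ * 0)) = η * (x - (τ₀ - κ * t)) := by ring
  have hphase : Complex.exp (Complex.I *
        (((-(κ * (x - (τ₀ - κ * t))) + (α₀ + (η ^ 2 + κ ^ 2) / 2 * t)) : ℝ) : ℂ)) =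
      Complex.exp (((η ^ 2 + κ ^ 2) / 2 * t : ℝ) * Complex.I) *
        Complex.exp (Complex.I *
          (((-(κ * (x + κ * t - (τ₀ - κ * 0))) + (α₀ + (η ^ 2 + κ ^ 2) / 2 * 0)) : ℝ) : ℂ)) := by
    rw [← Complex.exp_add]; congr 1; push_cast; ring
  simp only [manakovSoliton, hcosh, hphase, Prod.smul_mk, smul_eq_mul, Prod.mk.injEq]
  constructor <;> ring

theorem manakovSoliton_hamiltonian_const_general (η κ α₀ τ₀ θ φ₁ φ₂ : ℝ) :
    ∀ t : ℝ,
      (1 / 2 : ℝ) * ∫ x : ℝ,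
          ((‖deriv (fun x' : ℝ => (manakovSoliton η κ α₀ τ₀ θ φ₁ φ₂ x' t).1) x‖) ^ 2
            + (‖deriv (fun x' : ℝ => (manakovSoliton η κ α₀ τ₀ θ φ₁ φ₂ x' t).2) x‖) ^ 2)
        - (1 / 4 : ℝ) * ∫ x : ℝ,
          ((‖(manakovSoliton η κ α₀ τ₀ θ φ₁ φ₂ x t).1‖) ^ 2
            + (‖(manakovSoliton η κ α₀ τ₀ θ φ₁ φ₂ x t).2‖) ^ 2) ^ 2
      = (1 / 2 : ℝ) * ∫ x : ℝ,
          ((‖deriv (fun x' : ℝ => (manakovSoliton η κ α₀ τ₀ θ φ₁ φ₂ x' 0).1) x‖) ^ 2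
            + (‖deriv (fun x' : ℝ => (manakovSoliton η κ α₀ τ₀ θ φ₁ φ₂ x' 0).2) x‖) ^ 2)
        - (1 / 4 : ℝ) * ∫ x : ℝ,
          ((‖(manakovSoliton η κ α₀ τ₀ θ φ₁ φ₂ x 0).1‖) ^ 2
            + (‖(manakovSoliton η κ α₀ τ₀ θ φ₁ φ₂ x 0).2‖) ^ 2) ^ 2 := by
  intro t
  let X₀ := fun x => manakovSoliton η κ α₀ τ₀ θ φ₁ φ₂ x 0
  have hphase := Complex.norm_exp_ofReal_mul_I ((η ^ 2 + κ ^ 2) / 2 * t)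
  have hX : (fun y => manakovSoliton η κ α₀ τ₀ θ φ₁ φ₂ y t) =
      fun y => Complex.exp (((η ^ 2 + κ ^ 2) / 2 * t : ℝ) * Complex.I) • X₀ (y + κ * t) :=
    funext fun y => manakovSoliton_eq_smul_comp_add η κ α₀ τ₀ θ φ₁ φ₂ y t
  change (1 / 2 : ℝ) * ∫ x, (kineticDensity (fun y => manakovSoliton η κ α₀ τ₀ θ φ₁ φ₂ y t) x
      - (1 / 4 : ℝ) * ∫ y, massDensity (fun y => manakovSoliton η κ α₀ τ₀ θ φ₁ φ₂ y t) y ^ 2)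
    = (1 / 2 : ℝ) * ∫ x, (kineticDensity X₀ x - (1 / 4 : ℝ) * ∫ y, massDensity X₀ y ^ 2)
  simp only [hX, kineticDensity_smul_comp_add X₀ _ _ hphase,
    massDensity_smul_comp_add X₀ _ _ hphase]
  rw [integral_add_right_eq_self (fun y => massDensity X₀ y ^ 2),
    integral_add_right_eq_self (fun x => kineticDensity X₀ x - 1 / 4 * ∫ y, massDensity X₀ y ^ 2)]

/-- The Hamiltonian
`H(u) = (1/2)∫(|∂ₓu₁|² + |∂ₓu₂|²) − (1/4)∫(|u₁|² + |u₂|²)²`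
is constant along the Manakov soliton. -/
theorem manakovSoliton_hamiltonian_const (η κ α₀ τ₀ θ φ₁ φ₂ : ℝ) (hη : 0 < η) :
    ∀ t : ℝ,
      (1 / 2 : ℝ) * ∫ x : ℝ,
          ((‖deriv (fun x' : ℝ => (manakovSoliton η κ α₀ τ₀ θ φ₁ φ₂ x' t).1) x‖) ^ 2
            + (‖deriv (fun x' : ℝ => (manakovSoliton η κ α₀ τ₀ θ φ₁ φ₂ x' t).2) x‖) ^ 2)
        - (1 / 4 : ℝ) * ∫ x : ℝ,
          ((‖(manakovSoliton η κ α₀ τ₀ θ φ₁ φ₂ x t).1‖) ^ 2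
            + (‖(manakovSoliton η κ α₀ τ₀ θ φ₁ φ₂ x t).2‖) ^ 2) ^ 2
      = (1 / 2 : ℝ) * ∫ x : ℝ,
          ((‖deriv (fun x' : ℝ => (manakovSoliton η κ α₀ τ₀ θ φ₁ φ₂ x' 0).1) x‖) ^ 2
            + (‖deriv (fun x' : ℝ => (manakovSoliton η κ α₀ τ₀ θ φ₁ φ₂ x' 0).2) x‖) ^ 2)
        - (1 / 4 : ℝ) * ∫ x : ℝ,
          ((‖(manakovSoliton η κ α₀ τ₀ θ φ₁ φ₂ x 0).1‖) ^ 2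
            + (‖(manakovSoliton η κ α₀ τ₀ θ φ₁ φ₂ x 0).2‖) ^ 2) ^ 2 :=
  manakovSoliton_hamiltonian_const_general η κ α₀ τ₀ θ φ₁ φ₂
end

section
/- The squared L²-norm of the spatial derivative is constant along the Manakov soliton: for all t ∈ ℝ, ∫ℝ ( |∂ₓX₁(x,t)|² + |∂ₓX₂(x,t)|² ) dx = ∫ℝ ( |∂ₓX₁(x,0)|² + |∂ₓX₂(x,0)|² ) dx. -/
open MeasureTheory

/-!
Each component of the soliton is a fixed profile, translated by `τ(t)` and multiplied by the
unimodular phase `e^{iα(t)}`. So the modulus of its spatial derivative at time `t` is that of the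
profile's derivative translated by `τ(t)` (this holds for `deriv` as a total function, with no
differentiability needed), and Lebesgue measure is translation invariant.
-/

open Complex

noncomputable def manakovProfile (η κ : ℝ) (a : ℂ) (y : ℝ) : ℂ :=
  ((η / Real.cosh (η * y) : ℝ) : ℂ) * exp ((-(κ * y) : ℝ) * I) * a

lemma manakovSoliton_apply (η κ α₀ τ₀ θ φ₁ φ₂ x t : ℝ) :
    manakovSoliton η κ α₀ τ₀ θ φ₁ φ₂ x t =
      (exp ((α₀ + (η ^ 2 + κ ^ 2) / 2 * t : ℝ) * I) *
          manakovProfile η κ (Real.cos (θ / 2) * exp (I * φ₁)) (x - (τ₀ - κ * t)),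
        exp ((α₀ + (η ^ 2 + κ ^ 2) / 2 * t : ℝ) * I) *
          manakovProfile η κ (Real.sin (θ / 2) * exp (I * φ₂)) (x - (τ₀ - κ * t))) := by
  simp only [manakovSoliton, manakovProfile, Prod.smul_mk, smul_eq_mul, Prod.mk.injEq]
  push_cast
  constructor <;> rw [mul_comm I, add_mul, exp_add] <;> ring

lemma norm_deriv_unimodular_mul_comp_sub {𝕜 𝕜' : Type*} [NontriviallyNormedField 𝕜]
    [NormedDivisionRing 𝕜'] [NormedAlgebra 𝕜 𝕜'] {c : 𝕜'} (hc : ‖c‖ = 1) (f : 𝕜 → 𝕜')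
    (s x : 𝕜) :
    ‖deriv (fun x' => c * f (x' - s)) x‖ = ‖deriv f (x - s)‖ := by
  rw [deriv_const_mul_field, norm_mul, hc, one_mul, deriv_comp_sub_const]

theorem manakovSoliton_deriv_L2_const_general (η κ α₀ τ₀ θ φ₁ φ₂ : ℝ) :
    ∀ t : ℝ,
      (∫ x : ℝ,
        ((‖deriv (fun x' : ℝ => (manakovSoliton η κ α₀ τ₀ θ φ₁ φ₂ x' t).1) x‖) ^ 2
          + (‖deriv (fun x' : ℝ => (manakovSoliton η κ α₀ τ₀ θ φ₁ φ₂ x' t).2) x‖) ^ 2))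
      = ∫ x : ℝ,
        ((‖deriv (fun x' : ℝ => (manakovSoliton η κ α₀ τ₀ θ φ₁ φ₂ x' 0).1) x‖) ^ 2
          + (‖deriv (fun x' : ℝ => (manakovSoliton η κ α₀ τ₀ θ φ₁ φ₂ x' 0).2) x‖) ^ 2) := by
  intro t
  have translate_invariant (s : ℝ) := integral_sub_right_eq_self (μ := volume)
    (fun y => ‖deriv (manakovProfile η κ (Real.cos (θ / 2) * exp (I * φ₁))) y‖ ^ 2
      + ‖deriv (manakovProfile η κ (Real.sin (θ / 2) * exp (I * φ₂))) y‖ ^ 2) (τ₀ - κ * s)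
  simp only [manakovSoliton_apply,
    norm_deriv_unimodular_mul_comp_sub (norm_exp_ofReal_mul_I _)]
  rw [translate_invariant t, translate_invariant 0]

/-- The squared `L²`-norm of the spatial derivative,
`∫ (|∂ₓX₁|² + |∂ₓX₂|²) dx`, is constant along the Manakov soliton. -/
theorem manakovSoliton_deriv_L2_const (η κ α₀ τ₀ θ φ₁ φ₂ : ℝ) (hη : 0 < η) :
    ∀ t : ℝ,
      (∫ x : ℝ,
        ((‖deriv (fun x' : ℝ => (manakovSoliton η κ α₀ τ₀ θ φ₁ φ₂ x' t).1) x‖) ^ 2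
          + (‖deriv (fun x' : ℝ => (manakovSoliton η κ α₀ τ₀ θ φ₁ φ₂ x' t).2) x‖) ^ 2))
      = ∫ x : ℝ,
        ((‖deriv (fun x' : ℝ => (manakovSoliton η κ α₀ τ₀ θ φ₁ φ₂ x' 0).1) x‖) ^ 2
          + (‖deriv (fun x' : ℝ => (manakovSoliton η κ α₀ τ₀ θ φ₁ φ₂ x' 0).2) x‖) ^ 2) :=
  manakovSoliton_deriv_L2_const_general η κ α₀ τ₀ θ φ₁ φ₂
end

section
/- The second moment of the squared hyperbolic secant satisfies ∫ℝ x² / cosh²(x) dx = π²/6. -/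
/-!
For `x > 0`, expanding `1 / (1 + q)²` with `q = e^{-2x}` gives
`sech² x = ∑ₙ 4 (-1)ⁿ (n + 1) e^{-2(n+1)x}`. Since `∫₀^∞ x² e^{-cx} dx = 2 / c³`, the `n`-th
term contributes `(-1)ⁿ / (n + 1)²`; these are absolutely summable, so termwise integration is
legitimate and `∫₀^∞ x² sech² x dx = ∑ (-1)ⁿ / (n + 1)² = π² / 12`. The integrand is even.
-/

open MeasureTheory Real Set
open scoped Nat

theorem integral_pow_mul_exp_neg_mul_Ioi (k : ℕ) {c : ℝ} (hc : 0 < c) :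
    ∫ x in Ioi (0 : ℝ), x ^ k * exp (-(c * x)) = k ! / c ^ (k + 1) := by
  have h := integral_rpow_mul_exp_neg_mul_Ioi (a := k + 1) (by positivity) hc
  rw [add_sub_cancel_right, Gamma_nat_eq_factorial, ← Nat.cast_succ, rpow_natCast,
    div_pow, one_pow] at h
  simp_rw [rpow_natCast] at h
  rw [h, one_div_mul_eq_div]

theorem integrableOn_pow_mul_exp_neg_mul_Ioi (k : ℕ) {c : ℝ} (hc : 0 < c) :
    IntegrableOn (fun x : ℝ ↦ x ^ k * exp (-(c * x))) (Ioi 0) :=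
  .of_integral_ne_zero <| by rw [integral_pow_mul_exp_neg_mul_Ioi k hc]; positivity

theorem hasSum_integral_pow_mul_of_hasSum_exp {ι : Type*} [Countable ι] {a p : ι → ℝ}
    {f : ℝ → ℝ} (k : ℕ) (hp : ∀ i, 0 < p i)
    (hf : ∀ x ∈ Ioi (0 : ℝ), HasSum (fun i ↦ a i * exp (-(p i * x))) (f x))
    (hsum : Summable fun i ↦ |a i| * k ! / p i ^ (k + 1)) :
    HasSum (fun i ↦ a i * k ! / p i ^ (k + 1)) (∫ x in Ioi (0 : ℝ), x ^ k * f x) := by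
  have hF : ∀ i, ∫ x in Ioi (0 : ℝ), x ^ k * (a i * exp (-(p i * x))) =
      a i * k ! / p i ^ (k + 1) := fun i ↦ by
    simp_rw [mul_left_comm _ (a i), integral_const_mul,
      integral_pow_mul_exp_neg_mul_Ioi k (hp i), mul_div_assoc]
  have hF_int : ∀ i, IntegrableOn (fun x ↦ x ^ k * (a i * exp (-(p i * x)))) (Ioi 0) :=
    fun i ↦ by
      simp_rw [mul_left_comm _ (a i)]
      exact (integrableOn_pow_mul_exp_neg_mul_Ioi k (hp i)).const_mul (a i)
  have hF_norm : ∀ i, ∫ x in Ioi (0 : ℝ), ‖x ^ k * (a i * exp (-(p i * x)))‖ =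
      |a i| * k ! / p i ^ (k + 1) := fun i ↦ by
    rw [setIntegral_congr_fun measurableSet_Ioi
      (g := fun x ↦ |a i| * (x ^ k * exp (-(p i * x))))
      fun x (hx : 0 < x) ↦ by simp [abs_of_pos hx, mul_left_comm],
      integral_const_mul, integral_pow_mul_exp_neg_mul_Ioi k (hp i), mul_div_assoc]
  have h := hasSum_integral_of_summable_integral_norm hF_int (by simpa only [hF_norm] using hsum)
  simp only [hF] at h
  rwa [setIntegral_congr_fun measurableSet_Ioi fun x hx ↦ by
    rw [tsum_mul_left, (hf x hx).tsum_eq]] at h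

theorem hasSum_inv_cosh_sq {x : ℝ} (hx : 0 < x) :
    HasSum (fun n : ℕ ↦ 4 * (-1) ^ n * (n + 1) * exp (-(2 * (n + 1) * x))) (cosh x ^ 2)⁻¹ := by
  have hq : ‖-exp (-(2 * x))‖ < 1 := by
    rw [norm_neg, norm_of_nonneg (exp_nonneg _), exp_lt_one_iff]; linarith
  have h := (hasSum_choose_mul_geometric_of_norm_lt_one 1 hq).mul_left (4 * exp (-(2 * x)))
  convert! h using 1
  · funext n
    have : exp (-(2 * (n + 1) * x)) = exp (-(2 * x)) * exp (-(2 * x)) ^ n := by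
      rw [← exp_nat_mul, ← exp_add]; ring_nf
    rw [this, Nat.choose_one_right, neg_pow]
    push_cast
    ring
  · have h2x : exp (-(2 * x)) = exp (-x) ^ 2 := by rw [← exp_nat_mul]; ring_nf
    have hinv : exp x = (exp (-x))⁻¹ := by rw [exp_neg, inv_inv]
    rw [cosh_eq, h2x, hinv]
    field_simp
    ring

theorem hasSum_neg_one_pow_div_add_one_sq :
    HasSum (fun n : ℕ ↦ (-1) ^ n / ((n : ℝ) + 1) ^ 2) (π ^ 2 / 12) := by
  have ha : HasSum (fun n : ℕ ↦ 1 / ((n : ℝ) + 1) ^ 2) (π ^ 2 / 6) := by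
    simpa using (hasSum_nat_add_iff' 1).2 hasSum_zeta_two
  have ha_odd : HasSum (fun k : ℕ ↦ 1 / ((2 * k + 1 : ℕ) + 1 : ℝ) ^ 2) (π ^ 2 / 24) := by
    convert! ha.mul_left (1 / 4) using 1
    · funext k; push_cast; field_simp; ring
    · ring
  obtain ⟨e, ha_even⟩ : Summable fun k : ℕ ↦ 1 / ((2 * k : ℕ) + 1 : ℝ) ^ 2 :=
    ha.summable.comp_injective (mul_right_injective₀ two_ne_zero)
  have he : e = π ^ 2 / 8 := by
    have := HasSum.even_add_odd (f := fun n : ℕ ↦ 1 / ((n : ℝ) + 1) ^ 2) ha_even ha_odd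
    linarith [this.unique ha]
  convert! HasSum.even_add_odd (f := fun n : ℕ ↦ (-1) ^ n / ((n : ℝ) + 1) ^ 2)
    (by simpa [pow_mul] using ha_even) (by simpa [pow_succ, pow_mul, neg_div] using ha_odd.neg)
    using 1
  rw [he]; ring

theorem integral_Ioi_sq_div_cosh_sq : ∫ x in Ioi (0 : ℝ), x ^ 2 / cosh x ^ 2 = π ^ 2 / 12 := by
  have hterm : ∀ n : ℕ,
      4 * (-1) ^ n * ((n : ℝ) + 1) * (2 ! : ℕ) / (2 * ((n : ℝ) + 1)) ^ (2 + 1) =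
        (-1) ^ n / ((n : ℝ) + 1) ^ 2 := fun n ↦ by
    field_simp
    norm_num
    ring
  have h := hasSum_integral_pow_mul_of_hasSum_exp 2 (fun n : ℕ ↦ by positivity)
    (fun x hx ↦ hasSum_inv_cosh_sq hx) ?_
  · simp only [hterm, ← div_eq_mul_inv] at h
    exact h.unique hasSum_neg_one_pow_div_add_one_sq
  · refine hasSum_neg_one_pow_div_add_one_sq.summable.abs.congr fun n ↦ ?_
    have hp : (0 : ℝ) < (2 * ((n : ℝ) + 1)) ^ (2 + 1) := by positivity
    rw [← hterm, abs_div, abs_mul, Nat.abs_cast, abs_of_pos hp]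

/-- The second moment of the squared hyperbolic secant:
`∫ℝ x²/cosh²(x) dx = π²/6`. -/
theorem integral_sq_div_cosh_sq : ∫ x : ℝ, x ^ 2 / Real.cosh x ^ 2 = Real.pi ^ 2 / 6 :=
  calc ∫ x : ℝ, x ^ 2 / cosh x ^ 2 = ∫ x : ℝ, |x| ^ 2 / cosh |x| ^ 2 := by
        simp_rw [sq_abs, cosh_abs]
    _ = 2 * ∫ x in Ioi (0 : ℝ), x ^ 2 / cosh x ^ 2 :=
        integral_comp_abs (f := fun x ↦ x ^ 2 / cosh x ^ 2)
    _ = π ^ 2 / 6 := by rw [integral_Ioi_sq_div_cosh_sq]; ring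
end
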